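/- arXiv:2501.07539 — 2 statements merged into one kernel-verified Lean document; each statement's English description precedes it below -/
import Mathlib

section
/- Let θ ∈ (0,1), α ∈ (0,1), and C > 0. There exists a constant M < ∞, depending only on θ, α, C, such that for every K ∈ N and every ε ∈ (0,1) with θ^{K} ≥ ε, the product ∏_{k=1}^{K} (1 + θ^{αk} + C θ^{-(k-1)} ε) is bounded by M. -/
/-!
Bound each factor by `exp`, so the product is at most the exponential of
`∑ θ^{αk} + C ε ∑ θ^{-(k-1)}`. The first sum is a convergent geometric series in `θ^α`.
The second is a geometric series in `θ⁻¹`, dominated by its last term `θ^{-(K-1)}`;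
since `ε ≤ θ^K`, after reversing the order of summation it is the geometric series
`∑_{j=1}^K θ^j ≤ θ / (1 - θ)`.
-/

open Finset

lemma sum_Icc_one_pow_le_of_lt_one {x : ℝ} (hx₀ : 0 ≤ x) (hx₁ : x < 1) (K : ℕ) :
    ∑ k ∈ Icc 1 K, x ^ k ≤ x / (1 - x) := by
  simpa [← Ico_add_one_right_eq_Icc] using geom_sum_Ico_le_of_lt_one (m := 1) (n := K + 1) hx₀ hx₁

lemma rpow_neg_sub_one_mul_pow {θ : ℝ} (hθ : 0 < θ) {k K : ℕ} (hk : k ≤ K + 1) :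
    θ ^ (-((k : ℝ) - 1)) * θ ^ K = θ ^ (K + 1 - k) := by
  rw [← Real.rpow_natCast θ K, ← Real.rpow_add hθ, ← Real.rpow_natCast, Nat.cast_sub hk]
  push_cast
  ring_nf

lemma sum_Icc_one_rpow_neg_sub_one_mul_le {θ ε : ℝ} (hθ₀ : 0 < θ) (hθ₁ : θ < 1) {K : ℕ}
    (hε : ε ≤ θ ^ K) :
    ∑ k ∈ Icc 1 K, θ ^ (-((k : ℝ) - 1)) * ε ≤ θ / (1 - θ) :=
  calc ∑ k ∈ Icc 1 K, θ ^ (-((k : ℝ) - 1)) * ε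
      ≤ ∑ k ∈ Icc 1 K, θ ^ (-((k : ℝ) - 1)) * θ ^ K := by
        gcongr
    _ = ∑ k ∈ Icc 1 K, θ ^ (K + 1 - k) :=
        sum_congr rfl fun k hk ↦ rpow_neg_sub_one_mul_pow hθ₀ (by simp at hk; omega)
    _ = ∑ j ∈ Icc 1 K, θ ^ j :=
        sum_nbij' (fun k ↦ K + 1 - k) (fun j ↦ K + 1 - j) (by simp; omega) (by simp; omega)
          (by simp; omega) (by simp; omega) fun _ _ ↦ rfl
    _ ≤ θ / (1 - θ) := sum_Icc_one_pow_le_of_lt_one hθ₀.le hθ₁ K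

theorem campanato_product_bound (θ α C : ℝ)
    (hθ : θ ∈ Set.Ioo (0 : ℝ) 1) (hα : α ∈ Set.Ioo (0 : ℝ) 1) (hC : 0 < C) :
    ∃ M : ℝ, ∀ K : ℕ, ∀ ε : ℝ, 0 < ε → ε < 1 → ε ≤ θ ^ K →
      ∏ k ∈ Finset.Icc 1 K, (1 + θ ^ (α * (k : ℝ)) + C * θ ^ (-((k : ℝ) - 1)) * ε) ≤ M := by
  obtain ⟨hθ₀, hθ₁⟩ := hθ
  have hr₀ : 0 ≤ θ ^ α := Real.rpow_nonneg hθ₀.le α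
  have hr₁ : θ ^ α < 1 := Real.rpow_lt_one hθ₀.le hθ₁ hα.1
  refine ⟨Real.exp (θ ^ α / (1 - θ ^ α) + C * (θ / (1 - θ))), fun K ε hε₀ _ hε ↦ ?_⟩
  have hpow : ∀ k : ℕ, θ ^ (α * (k : ℝ)) = (θ ^ α) ^ k := Real.rpow_mul_natCast hθ₀.le α
  calc ∏ k ∈ Icc 1 K, (1 + θ ^ (α * (k : ℝ)) + C * θ ^ (-((k : ℝ) - 1)) * ε)
      = ∏ k ∈ Icc 1 K, (1 + ((θ ^ α) ^ k + C * (θ ^ (-((k : ℝ) - 1)) * ε))) := by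
        simp only [hpow, add_assoc, mul_assoc]
    _ ≤ Real.exp (∑ k ∈ Icc 1 K, ((θ ^ α) ^ k + C * (θ ^ (-((k : ℝ) - 1)) * ε))) :=
        Real.prod_one_add_le_exp_sum _ fun k ↦ by positivity
    _ ≤ Real.exp (θ ^ α / (1 - θ ^ α) + C * (θ / (1 - θ))) := by
        rw [Real.exp_le_exp, sum_add_distrib, ← mul_sum]
        gcongr
        · exact sum_Icc_one_pow_le_of_lt_one hr₀ hr₁ K
        · exact sum_Icc_one_rpow_neg_sub_one_mul_le hθ₀ hθ₁ hε
end

section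
/- Let x, y, x', y' ∈ R^d satisfy |x-y| ≥ 7, |x'-x| ≤ 2, |x'-y'| ≤ 1, and |x'-y| ≤ |x-y| - 3/4. Then |x-y|² + |x'-y'|² - |x-y'|² - |x'-y|² ≥ (3/2)|x-y| - 4 - 4|x'-y'| - 9/16 ≥ 1. -/
theorem four_point_quantitative (d : ℕ) (x y x' y' : EuclideanSpace ℝ (Fin d))
    (hxy : 7 ≤ ‖x - y‖) (hxx' : ‖x' - x‖ ≤ 2) (hx'y' : ‖x' - y'‖ ≤ 1)
    (hx'y : ‖x' - y‖ ≤ ‖x - y‖ - 3 / 4) :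
    (3 / 2 : ℝ) * ‖x - y‖ - 4 - 4 * ‖x' - y'‖ - 9 / 16
        ≤ ‖x - y‖ ^ 2 + ‖x' - y'‖ ^ 2 - ‖x - y'‖ ^ 2 - ‖x' - y‖ ^ 2
      ∧ (1 : ℝ) ≤ (3 / 2 : ℝ) * ‖x - y‖ - 4 - 4 * ‖x' - y'‖ - 9 / 16 := by
  have h1 : ‖x - y'‖ ≤ 2 + ‖x' - y'‖ := by
    have := norm_sub_le_norm_sub_add_norm_sub x x' y'
    rw [norm_sub_rev x x'] at this
    linarith
  have h2 : (0:ℝ) ≤ ‖x - y'‖ := norm_nonneg _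
  have h3 : (0:ℝ) ≤ ‖x' - y‖ := norm_nonneg _
  have h4 : (0:ℝ) ≤ ‖x' - y'‖ := norm_nonneg _
  constructor
  · nlinarith [sq_nonneg (‖x - y'‖ - 2 - ‖x' - y'‖), sq_nonneg (‖x' - y‖ - ‖x - y‖ + 3/4)]
  · linarith
end
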